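/- Let P be a complex polynomial of degree at most 2 and let a₀, a₁ ∈ ℂ be not both zero. Then there is no constant C > 0 such that |e^{P(w)} (a₁ w − a₀)| ≤ C · (log(1+|w|))^{1/2} / |w| for all w ∈ 𝒵∖{0}. -/

import Mathlib

open MeasureTheory Complex Filter
open scoped Real ComplexConjugate InnerProductSpace

noncomputable section

/-- The Gaussian integer lattice `𝒵 = {m + i n : m, n ∈ ℤ}`. -/
def Zlat : Set ℂ := {z | ∃ m n : ℤ, z = (m : ℂ) + (n : ℂ) * I}

/-!
Since `P(w) = γ + β w + α w²`, one of the four lattice units `d ∈ {±1, ±i}` makes both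
`Re(α d²)` and `Re(β d)` nonnegative, so `|e^{P(m d)}| ≥ e^{Re γ}` along the lattice ray
`m ↦ m d`. On that ray `|a₁ w - a₀|` stays bounded away from `0`, whereas the right-hand side
`C (log(1 + m))^{1/2} / m` tends to `0`.
-/

open Topology Bornology Polynomial

lemma natCast_mul_mem_Zlat {z : ℂ} (hz : z ∈ Zlat) (k : ℕ) : (k : ℂ) * z ∈ Zlat := by
  obtain ⟨m, n, rfl⟩ := hz
  exact ⟨k * m, k * n, by push_cast; ring⟩

lemma exists_unit_mem_Zlat_re_nonneg (α β : ℂ) :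
    ∃ d ∈ Zlat, ‖d‖ = 1 ∧ 0 ≤ (α * d ^ 2).re ∧ 0 ≤ (β * d).re := by
  rcases le_or_gt 0 α.re with hα | hα
  · rcases le_or_gt 0 β.re with hβ | hβ
    · exact ⟨1, ⟨1, 0, by simp⟩, by simp, by simpa using hα, by simpa using hβ⟩
    · exact ⟨-1, ⟨-1, 0, by simp⟩, by simp, by simpa using hα, by simp; linarith⟩
  · rcases le_or_gt 0 (β * I).re with hβ | hβ
    · exact ⟨I, ⟨0, 1, by simp⟩, by simp, by simp; linarith, hβ⟩
    · refine ⟨-I, ⟨0, -1, by simp⟩, by simp, by simp; linarith, ?_⟩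
      rw [mul_neg, neg_re]
      linarith

lemma Polynomial.eval_eq_of_degree_le_two {R : Type*} [CommSemiring R] {P : R[X]}
    (hP : P.degree ≤ 2) (x : R) :
    P.eval x = P.coeff 0 + P.coeff 1 * x + P.coeff 2 * x ^ 2 := by
  have hn : P.natDegree < 3 := Nat.lt_succ_of_le (natDegree_le_iff_degree_le.mpr hP)
  simp [eval_eq_sum_range' hn, Finset.sum_range_succ]

lemma re_coeff_zero_le_re_eval_mul {P : ℂ[X]} (hP : P.degree ≤ 2) {d : ℂ}
    (h₂ : 0 ≤ (P.coeff 2 * d ^ 2).re) (h₁ : 0 ≤ (P.coeff 1 * d).re) {t : ℝ} (ht : 0 ≤ t) :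
    (P.coeff 0).re ≤ (P.eval (t * d)).re := by
  have hsplit : P.eval (t * d) =
      P.coeff 0 + t * (P.coeff 1 * d) + (t ^ 2 : ℝ) * (P.coeff 2 * d ^ 2) := by
    rw [eval_eq_of_degree_le_two hP]
    push_cast
    ring
  rw [hsplit, add_re, add_re, re_ofReal_mul, re_ofReal_mul]
  have := mul_nonneg ht h₁
  have := mul_nonneg (sq_nonneg t) h₂
  linarith

lemma exists_pos_eventually_le_norm_mul_sub {a₀ a₁ : ℂ} (ha : ¬(a₀ = 0 ∧ a₁ = 0)) :
    ∃ ε > 0, ∀ᶠ w in cobounded ℂ, ε ≤ ‖a₁ * w - a₀‖ := by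
  by_cases ha₁ : a₁ = 0
  · have ha₀ : a₀ ≠ 0 := fun ha₀ => ha ⟨ha₀, ha₁⟩
    exact ⟨‖a₀‖, norm_pos_iff.2 ha₀, Eventually.of_forall fun w => by simp [ha₁]⟩
  · have hnorm : 0 < ‖a₁‖ := norm_pos_iff.2 ha₁
    refine ⟨1, one_pos, ?_⟩
    filter_upwards [tendsto_norm_cobounded_atTop.eventually_ge_atTop ((‖a₀‖ + 1) / ‖a₁‖)]
      with w hw
    rw [div_le_iff₀ hnorm] at hw
    have := norm_sub_norm_le (a₁ * w) a₀
    rw [norm_mul] at this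
    linarith

lemma tendsto_sqrt_log_one_add_div_atTop :
    Tendsto (fun x : ℝ => √(Real.log (1 + x)) / x) atTop (𝓝 0) := by
  have hbound : Tendsto (fun x : ℝ => (√x)⁻¹) atTop (𝓝 0) :=
    tendsto_inv_atTop_zero.comp Real.tendsto_sqrt_atTop
  refine tendsto_of_tendsto_of_tendsto_of_le_of_le' tendsto_const_nhds hbound ?_ ?_
  · filter_upwards [eventually_ge_atTop 0] with x hx
    positivity
  · filter_upwards [eventually_ge_atTop 0] with x hx
    have hlog : Real.log (1 + x) ≤ x := by
      linarith [Real.log_le_sub_one_of_pos (show 0 < 1 + x by linarith)]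
    calc √(Real.log (1 + x)) / x ≤ √x / x := by gcongr
      _ = (√x)⁻¹ := by rw [Real.sqrt_div_self', one_div]

/-- No function of the form `e^{P(w)}(a₁ w - a₀)` with `deg P ≤ 2` and `(a₀,a₁) ≠ (0,0)`
can satisfy the decay bound `|e^{P(w)}(a₁ w - a₀)| ≲ log^{1/2}(1+|w|)/|w|` on `𝒵∖{0}`. -/
theorem no_decaying_exp_polynomial
    (P : Polynomial ℂ) (hP : P.degree ≤ 2) (a₀ a₁ : ℂ) (ha : ¬(a₀ = 0 ∧ a₁ = 0)) :
    ¬ ∃ C : ℝ, 0 < C ∧ ∀ w ∈ Zlat \ {0},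
      ‖Complex.exp (P.eval w) * (a₁ * w - a₀)‖ ≤
        C * Real.sqrt (Real.log (1 + ‖w‖)) / ‖w‖ := by
  rintro ⟨C, -, hbound⟩
  obtain ⟨d, hdZ, hd, h₂, h₁⟩ := exists_unit_mem_Zlat_re_nonneg (P.coeff 2) (P.coeff 1)
  obtain ⟨ε, hε, hlin⟩ := exists_pos_eventually_le_norm_mul_sub ha
  have hnorm (m : ℕ) : ‖(m : ℂ) * d‖ = m := by simp [hd]
  have hray : Tendsto (fun m : ℕ => (m : ℂ) * d) atTop (cobounded ℂ) := by
    rw [← tendsto_norm_atTop_iff_cobounded]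
    simpa only [hnorm] using tendsto_natCast_atTop_atTop (R := ℝ)
  have hlower : ∀ᶠ m : ℕ in atTop,
      Real.exp (P.coeff 0).re * ε ≤ C * (√(Real.log (1 + m)) / m) := by
    filter_upwards [hray.eventually hlin, eventually_ge_atTop 1] with m hm hm₁
    have hmem : (m : ℂ) * d ∈ Zlat \ {0} :=
      ⟨natCast_mul_mem_Zlat hdZ m, norm_ne_zero_iff.mp <| by
        rw [hnorm]; exact_mod_cast Nat.one_le_iff_ne_zero.mp hm₁⟩
    calc Real.exp (P.coeff 0).re * ε
        ≤ Real.exp (P.eval ((m : ℂ) * d)).re * ‖a₁ * ((m : ℂ) * d) - a₀‖ := by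
          refine mul_le_mul (Real.exp_le_exp.2 ?_) hm hε.le (Real.exp_nonneg _)
          exact_mod_cast re_coeff_zero_le_re_eval_mul hP h₂ h₁ m.cast_nonneg
      _ ≤ _ := by
          have := hbound _ hmem
          rwa [hnorm, norm_mul, norm_exp, mul_div_assoc] at this
  have hupper : Tendsto (fun m : ℕ => C * (√(Real.log (1 + m)) / m)) atTop (𝓝 0) := by
    simpa using (tendsto_sqrt_log_one_add_div_atTop.comp tendsto_natCast_atTop_atTop).const_mul C
  exact (ge_of_tendsto hupper hlower).not_gt (by positivity)
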